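/- arXiv:2406.03895 — 7 statements merged into one kernel-verified Lean document; each statement's English description precedes it below -/
import Mathlib

section
/- Let (Ω, Σ, μ) be a measure space, X a Banach function space over μ, and T : X → L⁰(μ) an operator such that T(0) = 0 and there exists a nonnegative function K : Ω → ℝ with |T(f)(w) − T(g)(w)| ≤ K(w)·|f(w) − g(w)| for μ-almost every w, for all f, g ∈ X. Then for every f ∈ X and every measurable set A, T(f·χ_A) = T(f)·χ_A μ-almost everywhere. -/
open MeasureTheory Filter Set Topology

structure BanachFunctionSpace (Ω : Type*) [MeasurableSpace Ω] (μ : Measure Ω) where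
  carrier : Set (Ω → ℝ)
  norm : (Ω → ℝ) → ℝ
  measurable_mem : ∀ f ∈ carrier, Measurable f
  zero_mem : (fun _ => (0 : ℝ)) ∈ carrier
  one_mem : (fun _ => (1 : ℝ)) ∈ carrier
  add_mem : ∀ f ∈ carrier, ∀ g ∈ carrier, f + g ∈ carrier
  smul_mem : ∀ (c : ℝ), ∀ f ∈ carrier, c • f ∈ carrier
  ideal_mem : ∀ f : Ω → ℝ, Measurable f → ∀ g ∈ carrier,
    (∀ᵐ w ∂μ, |f w| ≤ |g w|) → f ∈ carrier
  norm_nonneg : ∀ f, 0 ≤ norm f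
  norm_congr : ∀ f g : Ω → ℝ, f =ᵐ[μ] g → norm f = norm g
  norm_pos : ∀ f ∈ carrier, ¬ (f =ᵐ[μ] (fun _ => (0 : ℝ))) → 0 < norm f
  norm_triangle : ∀ f ∈ carrier, ∀ g ∈ carrier, norm (f + g) ≤ norm f + norm g
  norm_smul : ∀ (c : ℝ) (f : Ω → ℝ), norm (c • f) = |c| * norm f
  norm_mono : ∀ f ∈ carrier, ∀ g ∈ carrier,
    (∀ᵐ w ∂μ, |f w| ≤ |g w|) → norm f ≤ norm g
  complete : ∀ F : ℕ → Ω → ℝ, (∀ n, F n ∈ carrier) →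
    (∀ ε : ℝ, 0 < ε → ∃ N, ∀ m ≥ N, ∀ n ≥ N, norm (F m - F n) < ε) →
    ∃ f ∈ carrier, Tendsto (fun n => norm (F n - f)) atTop (𝓝 0)

/-- The Lipschitz constant of a real function, as an infimum of admissible constants. -/
noncomputable def lipConst (φ : ℝ → ℝ) : ℝ :=
  sInf {K : ℝ | 0 ≤ K ∧ ∀ x y : ℝ, |φ x - φ y| ≤ K * |x - y|}

/-- Membership in `Lip₀(ℝ)`: Lipschitz and vanishing at `0`. -/
def IsLip0 (φ : ℝ → ℝ) : Prop := φ 0 = 0 ∧ ∃ K : NNReal, LipschitzWith K φ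

/-- A simple `Lip₀(ℝ)`-valued function: finitely many values, measurable fibers,
all values Lipschitz and vanishing at 0. -/
def SimpleLipValued {Ω : Type*} [MeasurableSpace Ω] (ψ : Ω → ℝ → ℝ) : Prop :=
  (Set.range ψ).Finite ∧ (∀ φ : ℝ → ℝ, MeasurableSet {w | ψ w = φ}) ∧ ∀ w, IsLip0 (ψ w)

/-- Strong measurability of a `Lip₀(ℝ)`-valued function: a.e. limit (in the
Lipschitz-constant norm) of a sequence of simple `Lip₀(ℝ)`-valued functions. -/
def StronglyMeasLip {Ω : Type*} [MeasurableSpace Ω] (μ : Measure Ω) (Φ : Ω → ℝ → ℝ) : Prop :=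
  ∃ ψ : ℕ → Ω → ℝ → ℝ, (∀ n, SimpleLipValued (ψ n)) ∧
    ∀ᵐ w ∂μ, Tendsto (fun n => lipConst (Φ w - ψ n w)) atTop (𝓝 0)

/-- a lattice Lipschitz operator with `T 0 = 0` satisfies
`T (f·χ_A) = T(f)·χ_A` μ-a.e. -/
theorem stmt0 {Ω : Type*} [MeasurableSpace Ω] (μ : Measure Ω)
    (X : BanachFunctionSpace Ω μ)
    (T : (Ω → ℝ) → (Ω → ℝ)) (K : Ω → ℝ)
    (hK : ∀ w, 0 ≤ K w)
    (hT0 : T (fun _ => (0 : ℝ)) = fun _ => (0 : ℝ))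
    (hLip : ∀ f ∈ X.carrier, ∀ g ∈ X.carrier,
      ∀ᵐ w ∂μ, |T f w - T g w| ≤ K w * |f w - g w|) :
    ∀ f ∈ X.carrier, ∀ A : Set Ω, MeasurableSet A →
      T (A.indicator f) =ᵐ[μ] A.indicator (T f) := by
  intro f hf A hA
  have hfm := X.measurable_mem f hf
  have hind : A.indicator f ∈ X.carrier := by
    apply X.ideal_mem _ (hfm.indicator hA) f hf
    filter_upwards with w
    by_cases hw : w ∈ A
    · simp [Set.indicator_of_mem hw]
    · simp [Set.indicator_of_notMem hw, abs_nonneg]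
  have h1 := hLip (A.indicator f) hind f hf
  have h2 := hLip (A.indicator f) hind _ X.zero_mem
  filter_upwards [h1, h2] with w h1 h2
  by_cases hw : w ∈ A
  · rw [Set.indicator_of_mem hw]
    have : |T (A.indicator f) w - T f w| ≤ 0 := by
      simpa [Set.indicator_of_mem hw] using h1
    have := abs_nonpos_iff.mp this
    linarith
  · rw [Set.indicator_of_notMem hw]
    have : |T (A.indicator f) w - T (fun _ => (0:ℝ)) w| ≤ 0 := by
      simpa [Set.indicator_of_notMem hw] using h2
    rw [hT0] at this
    have := abs_nonpos_iff.mp this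
    simpa using this
end

section
/- Let (Ω, Σ, μ) be a measure space, X a Banach function space over μ, and T : X → L⁰(μ) a lattice Lipschitz operator with T(0) = 0. Then for all f, g ∈ X and disjoint measurable sets A, B ∈ Σ, one has T(f·χ_A + g·χ_B) = T(f·χ_A) + T(g·χ_B) μ-almost everywhere. -/
open MeasureTheory Filter Set Topology

/-- a lattice Lipschitz operator with `T 0 = 0` is additive on
functions with disjoint supports: `T(f·χ_A + g·χ_B) = T(f·χ_A) + T(g·χ_B)` μ-a.e. -/
theorem stmt1 {Ω : Type*} [MeasurableSpace Ω] (μ : Measure Ω)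
    (X : BanachFunctionSpace Ω μ)
    (T : (Ω → ℝ) → (Ω → ℝ)) (K : Ω → ℝ)
    (hK : ∀ w, 0 ≤ K w)
    (hT0 : T (fun _ => (0 : ℝ)) = fun _ => (0 : ℝ))
    (hLip : ∀ f ∈ X.carrier, ∀ g ∈ X.carrier,
      ∀ᵐ w ∂μ, |T f w - T g w| ≤ K w * |f w - g w|) :
    ∀ f ∈ X.carrier, ∀ g ∈ X.carrier, ∀ A B : Set Ω,
      MeasurableSet A → MeasurableSet B → Disjoint A B →
      T (A.indicator f + B.indicator g) =ᵐ[μ] T (A.indicator f) + T (B.indicator g) := by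
  intro f hf g hg A B hA hB hAB
  have hfm := X.measurable_mem f hf
  have hgm := X.measurable_mem g hg
  have habs : ∀ (C : Set Ω) (h : Ω → ℝ) (w : Ω), |C.indicator h w| ≤ |h w| := by
    intro C h w
    by_cases hw : w ∈ C <;> simp [Set.indicator_of_mem, Set.indicator_of_notMem, hw, abs_nonneg]
  have hfA : A.indicator f ∈ X.carrier :=
    X.ideal_mem _ (hfm.indicator hA) f hf (Filter.Eventually.of_forall (habs A f))
  have hgB : B.indicator g ∈ X.carrier :=
    X.ideal_mem _ (hgm.indicator hB) g hg (Filter.Eventually.of_forall (habs B g))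
  have hsum : A.indicator f + B.indicator g ∈ X.carrier := X.add_mem _ hfA _ hgB
  have h0 : (fun _ => (0 : ℝ)) ∈ X.carrier := X.zero_mem
  have h1 := hLip _ hsum _ hfA
  have h2 := hLip _ hsum _ hgB
  have h3 := hLip _ hfA _ h0
  have h4 := hLip _ hgB _ h0
  filter_upwards [h1, h2, h3, h4] with w e1 e2 e3 e4
  simp only [hT0, sub_zero] at e3 e4
  have key : ∀ a : ℝ, |a| ≤ K w * 0 → a = 0 := by
    intro a ha
    rw [mul_zero] at ha
    exact abs_eq_zero.mp (le_antisymm ha (abs_nonneg a))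
  simp only [Pi.add_apply]
  by_cases hwA : w ∈ A
  · have hwB : w ∉ B := fun hwB => (hAB.le_bot ⟨hwA, hwB⟩).elim
    have hBg0 : B.indicator g w = 0 := Set.indicator_of_notMem hwB g
    have e1' : T (A.indicator f + B.indicator g) w = T (A.indicator f) w := by
      have := e1
      simp only [Pi.add_apply, hBg0, add_zero, sub_self, abs_zero] at this
      have : |T (A.indicator f + B.indicator g) w - T (A.indicator f) w| ≤ K w * 0 := by
        simpa [hBg0] using e1
      linarith [key _ this, sub_eq_zero.mp (key _ this)]
    have e4' : T (B.indicator g) w = 0 := key _ (by simpa [hBg0] using e4)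
    rw [e1', e4', add_zero]
  · by_cases hwB : w ∈ B
    · have hAf0 : A.indicator f w = 0 := Set.indicator_of_notMem hwA f
      have e2' : T (A.indicator f + B.indicator g) w = T (B.indicator g) w := by
        have : |T (A.indicator f + B.indicator g) w - T (B.indicator g) w| ≤ K w * 0 := by
          simpa [hAf0] using e2
        linarith [sub_eq_zero.mp (key _ this)]
      have e3' : T (A.indicator f) w = 0 := key _ (by simpa [hAf0] using e3)
      rw [e2', e3', zero_add]
    · have hAf0 : A.indicator f w = 0 := Set.indicator_of_notMem hwA f
      have hBg0 : B.indicator g w = 0 := Set.indicator_of_notMem hwB g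
      have e3' : T (A.indicator f) w = 0 := key _ (by simpa [hAf0] using e3)
      have e4' : T (B.indicator g) w = 0 := key _ (by simpa [hBg0] using e4)
      have e1' : T (A.indicator f + B.indicator g) w = T (A.indicator f) w := by
        have : |T (A.indicator f + B.indicator g) w - T (A.indicator f) w| ≤ K w * 0 := by
          simpa [hBg0] using e1
        linarith [sub_eq_zero.mp (key _ this)]
      rw [e1', e3', e4', add_zero]
end

section
/- Let (Ω, Σ, μ) be a finite measure space, X(μ) and Y(μ) Banach function spaces over μ, and T : X(μ) → Y(μ) a linear continuous operator. Then T is lattice Lipschitz if and only if there exists a measurable function h with h·f ∈ Y(μ) for all f ∈ X(μ) such that T(f) = h·f μ-a.e. for all f ∈ X(μ). Moreover, in that case K(w) = |h(w)| is a valid bound function for T. -/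
open MeasureTheory Filter Set Topology

/-- a linear continuous operator between Banach function spaces over a
finite measure is lattice Lipschitz iff it is a multiplication operator `M_h`;
moreover `K = |h|` is then a valid bound function. -/
theorem stmt2 {Ω : Type*} [MeasurableSpace Ω] (μ : Measure Ω) [IsFiniteMeasure μ]
    (X Y : BanachFunctionSpace Ω μ)
    (T : (Ω → ℝ) → (Ω → ℝ))
    (hmaps : ∀ f ∈ X.carrier, T f ∈ Y.carrier)
    (hwd : ∀ f ∈ X.carrier, ∀ g ∈ X.carrier, f =ᵐ[μ] g → T f =ᵐ[μ] T g)
    (hadd : ∀ f ∈ X.carrier, ∀ g ∈ X.carrier, T (f + g) =ᵐ[μ] T f + T g)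
    (hsmul : ∀ (c : ℝ), ∀ f ∈ X.carrier, T (c • f) =ᵐ[μ] c • T f)
    (hcont : ∃ C : ℝ, 0 ≤ C ∧ ∀ f ∈ X.carrier, Y.norm (T f) ≤ C * X.norm f) :
    ((∃ K : Ω → ℝ, (∀ w, 0 ≤ K w) ∧ ∀ f ∈ X.carrier, ∀ g ∈ X.carrier,
        ∀ᵐ w ∂μ, |T f w - T g w| ≤ K w * |f w - g w|) ↔
      (∃ h : Ω → ℝ, Measurable h ∧
        (∀ f ∈ X.carrier, (fun w => h w * f w) ∈ Y.carrier) ∧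
        ∀ f ∈ X.carrier, T f =ᵐ[μ] fun w => h w * f w)) ∧
    (∀ h : Ω → ℝ, Measurable h →
      (∀ f ∈ X.carrier, (fun w => h w * f w) ∈ Y.carrier) →
      (∀ f ∈ X.carrier, T f =ᵐ[μ] fun w => h w * f w) →
      ∀ f ∈ X.carrier, ∀ g ∈ X.carrier,
        ∀ᵐ w ∂μ, |T f w - T g w| ≤ |h w| * |f w - g w|) := by
  have second : ∀ h : Ω → ℝ, Measurable h →
      (∀ f ∈ X.carrier, (fun w => h w * f w) ∈ Y.carrier) →
      (∀ f ∈ X.carrier, T f =ᵐ[μ] fun w => h w * f w) →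
      ∀ f ∈ X.carrier, ∀ g ∈ X.carrier,
        ∀ᵐ w ∂μ, |T f w - T g w| ≤ |h w| * |f w - g w| := by
    intro h _ _ hrep f hf g hg
    filter_upwards [hrep f hf, hrep g hg] with w h1 h2
    rw [h1, h2, ← mul_sub, abs_mul]
  refine ⟨⟨?_, ?_⟩, second⟩
  · rintro ⟨K, hK0, hKlip⟩
    set h := T (fun _ => (1:ℝ)) with hh
    have h1X : (fun _ => (1:ℝ)) ∈ X.carrier := X.one_mem
    have hY : h ∈ Y.carrier := hmaps _ h1X
    have hmeas : Measurable h := Y.measurable_mem _ hY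
    have key : ∀ f ∈ X.carrier, T f =ᵐ[μ] fun w => h w * f w := by
      intro f hf
      have h1 : ∀ q : ℚ, ∀ᵐ w ∂μ, |T f w - (q:ℝ) * h w| ≤ K w * |f w - (q:ℝ)| := by
        intro q
        have hqmem : ((q:ℝ) • (fun _ => (1:ℝ)) : Ω → ℝ) ∈ X.carrier :=
          X.smul_mem _ _ h1X
        have hlip := hKlip f hf _ hqmem
        have hs := hsmul (q:ℝ) _ h1X
        filter_upwards [hlip, hs] with w hw1 hw2
        simp only [Pi.smul_apply, smul_eq_mul, mul_one] at hw1 hw2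
        rw [hw2] at hw1
        simpa using hw1
      have hall : ∀ᵐ w ∂μ, ∀ q : ℚ, |T f w - (q:ℝ) * h w| ≤ K w * |f w - (q:ℝ)| :=
        (ae_all_iff).mpr h1
      filter_upwards [hall] with w hw
      have hb : ∀ ε : ℝ, 0 < ε → |T f w - h w * f w| ≤ ε := by
        intro ε hε
        have hC : (0:ℝ) < K w + |h w| + 1 := by
          have := hK0 w; have := abs_nonneg (h w); linarith
        obtain ⟨q, hq⟩ := exists_rat_near (f w) (div_pos hε hC)
        have h2 := hw q
        have h3 : |T f w - h w * f w| ≤ (K w + |h w|) * |f w - (q:ℝ)| := by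
          have : |T f w - h w * f w| ≤ |T f w - (q:ℝ) * h w| + |h w| * |f w - (q:ℝ)| := by
            have : T f w - h w * f w = (T f w - (q:ℝ) * h w) + (h w * ((q:ℝ) - f w)) := by ring
            rw [this]
            refine (abs_add_le _ _).trans ?_
            rw [abs_mul, abs_sub_comm (f w)]
          linarith [mul_le_mul_of_nonneg_right (le_refl (K w)) (abs_nonneg (f w - (q:ℝ)))]
        have h4 : (K w + |h w|) * |f w - (q:ℝ)| ≤ (K w + |h w| + 1) * (ε / (K w + |h w| + 1)) := by
          apply mul_le_mul (by linarith) hq.le (abs_nonneg _) (by positivity)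
        rw [mul_div_cancel₀ _ (ne_of_gt hC)] at h4
        linarith [h2]
      have : |T f w - h w * f w| ≤ 0 := by
        refine le_of_forall_pos_le_add ?_
        intro ε hε; simpa using hb ε hε
      have := abs_nonpos_iff.mp this
      linarith [sub_eq_zero.mp this, (sub_eq_zero.mp this : T f w = h w * f w)]
    refine ⟨h, hmeas, ?_, key⟩
    intro f hf
    refine Y.ideal_mem _ (hmeas.mul (X.measurable_mem f hf)) (T f) (hmaps f hf) ?_
    filter_upwards [key f hf] with w hw
    rw [hw]
  · rintro ⟨h, hmeas, hmem, hrep⟩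
    exact ⟨fun w => |h w|, fun w => abs_nonneg _, second h hmeas hmem hrep⟩
end

section
/- Let (Ω, Σ, μ) be a measure space, X(μ) a Banach function space, and T : X(μ) → L⁰(μ) a lattice Lipschitz operator with bound function K, i.e., for all f, g ∈ X(μ), |T(f)(w) − T(g)(w)| ≤ K(w)·|f(w) − g(w)| μ-a.e. Then there exists a function Φ : Ω → (ℝ → ℝ) such that for every λ ∈ ℝ, the function w ↦ Φ(w)(λ) is a representative of T(λχ_Ω), and for every w ∈ Ω, the function Φ(w) : ℝ → ℝ is K(w)-Lipschitz. -/
open MeasureTheory Filter Set Topology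

open scoped NNReal

/-! For a.e. `w`, countably many instances of the lattice Lipschitz inequality make
`q ↦ T(qχ_Ω)(w)` a `K(w)`-Lipschitz function on `ℚ`; its McShane extension `Φ(w)` to `ℝ` is
again `K(w)`-Lipschitz. For a fixed real `λ`, a.e. `w` also satisfies
`|T(λχ_Ω)(w) - Φ(w)(q)| ≤ K(w)|λ - q|` for every rational `q`, and since this inequality is
closed in `q` it extends to `q = λ`, forcing `Φ(w)(λ) = T(λχ_Ω)(w)`. -/

theorem LipschitzWith.exists_lipschitzWith_real_extension_of_rat {K : ℝ≥0} {g : ℚ → ℝ}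
    (hg : LipschitzWith K g) : ∃ φ : ℝ → ℝ, LipschitzWith K φ ∧ ∀ q : ℚ, φ q = g q := by
  set f : ℝ → ℝ := Function.extend ((↑) : ℚ → ℝ) g 0
  have hf : ∀ q : ℚ, f q = g q := fun q => Rat.cast_injective.extend_apply g 0 q
  have hfLip : LipschitzOnWith K f (range ((↑) : ℚ → ℝ)) := by
    refine LipschitzOnWith.of_dist_le_mul ?_
    rintro _ ⟨q, rfl⟩ _ ⟨q', rfl⟩
    rw [hf, hf, Rat.dist_cast]
    exact hg.dist_le_mul q q'
  obtain ⟨φ, hφ, hfφ⟩ := hfLip.extend_real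
  exact ⟨φ, hφ, fun q => (hfφ (mem_range_self q)).symm.trans (hf q)⟩

theorem eq_of_forall_rat_abs_sub_le {φ : ℝ → ℝ} (hφ : Continuous φ) {a c x : ℝ}
    (h : ∀ q : ℚ, |a - φ q| ≤ c * |x - q|) : a = φ x := by
  have hx : |a - φ x| ≤ c * |x - x| :=
    Rat.denseRange_cast.induction_on (p := fun y => |a - φ y| ≤ c * |x - y|) x
      (isClosed_le (by fun_prop) (by fun_prop)) h
  rw [sub_self, abs_zero, mul_zero, abs_nonpos_iff, sub_eq_zero] at hx
  exact hx

/-- every lattice Lipschitz operator `T : X(μ) → L⁰(μ)` with bound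
function `K` admits a function `Φ : Ω → (ℝ → ℝ)` such that `Φ(·)(λ)` is a
representative of `T(λχ_Ω)` for each `λ`, and `Φ(w)` is `K(w)`-Lipschitz for every `w`. -/
theorem stmt10 {Ω : Type*} [MeasurableSpace Ω] (μ : Measure Ω)
    (X : BanachFunctionSpace Ω μ)
    (T : (Ω → ℝ) → (Ω → ℝ)) (K : Ω → ℝ) (hK : ∀ w, 0 ≤ K w)
    (hconst : ∀ lam : ℝ, (fun _ : Ω => lam) ∈ X.carrier)
    (hLip : ∀ f ∈ X.carrier, ∀ g ∈ X.carrier,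
      ∀ᵐ w ∂μ, |T f w - T g w| ≤ K w * |f w - g w|) :
    ∃ Φ : Ω → ℝ → ℝ,
      (∀ lam : ℝ, (fun w => Φ w lam) =ᵐ[μ] T (fun _ => lam)) ∧
      (∀ w : Ω, ∀ x y : ℝ, |Φ w x - Φ w y| ≤ K w * |x - y|) := by
  have hLipConst (a b : ℝ) : ∀ᵐ w ∂μ, |T (fun _ => a) w - T (fun _ => b) w| ≤ K w * |a - b| :=
    hLip _ (hconst a) _ (hconst b)
  have hLipRat : ∀ᵐ w ∂μ, LipschitzWith (K w).toNNReal fun q : ℚ => T (fun _ => q) w := by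
    filter_upwards [ae_all_iff.2 fun q : ℚ => ae_all_iff.2 fun q' : ℚ => hLipConst q q'] with w hw
    refine LipschitzWith.of_dist_le_mul fun q q' => ?_
    rw [Real.coe_toNNReal _ (hK w), Real.dist_eq, ← Rat.dist_cast, Real.dist_eq]
    exact hw q q'
  have hext (w : Ω) : ∃ φ : ℝ → ℝ, LipschitzWith (K w).toNNReal φ ∧
      (LipschitzWith (K w).toNNReal (fun q : ℚ => T (fun _ => q) w) →
        ∀ q : ℚ, φ q = T (fun _ => q) w) := by
    by_cases hw : LipschitzWith (K w).toNNReal fun q : ℚ => T (fun _ => q) w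
    · obtain ⟨φ, hφ, hφq⟩ := hw.exists_lipschitzWith_real_extension_of_rat
      exact ⟨φ, hφ, fun _ => hφq⟩
    · exact ⟨fun _ => 0, LipschitzWith.const' 0, fun h => absurd h hw⟩
  choose Φ hΦLip hΦrat using hext
  have hΦabs (w : Ω) (x y : ℝ) : |Φ w x - Φ w y| ≤ K w * |x - y| := by
    simpa only [Real.coe_toNNReal _ (hK w), Real.dist_eq] using (hΦLip w).dist_le_mul x y
  refine ⟨Φ, fun lam => ?_, hΦabs⟩
  filter_upwards [hLipRat, ae_all_iff.2 fun q : ℚ => hLipConst lam q] with w hw hlam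
  refine (eq_of_forall_rat_abs_sub_le (c := K w) (hΦLip w).continuous fun q => ?_).symm
  rw [hΦrat w hw q]
  exact hlam q
end

section
/- Let X(μ), Y(μ) be Banach function spaces over (Ω, Σ, μ), and let Φ : Ω → Lip₀(ℝ) be strongly μ-measurable with w ↦ Lip(Φ(w)) belonging to the space of multipliers M(X,Y) (i.e., Lip(Φ(·))·f ∈ Y(μ) for every f ∈ X(μ)). Then the superposition operator T_Φ(f)(w) = Φ(w)(f(w)) is a well-defined map T_Φ : X(μ) → Y(μ), and it is Lipschitz continuous: ‖T_Φ(f) − T_Φ(g)‖_Y ≤ ‖Lip(Φ(·))‖_{M(X,Y)}·‖f − g‖_X for all f, g ∈ X(μ). -/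
open MeasureTheory Filter Set Topology

/-- Operator norm of the multiplication operator `f ↦ h·f` from `X(μ)` to `Y(μ)`. -/
noncomputable def multOpNorm {Ω : Type*} [MeasurableSpace Ω] {μ : Measure Ω}
    (X Y : BanachFunctionSpace Ω μ) (h : Ω → ℝ) : ℝ :=
  sInf {C : ℝ | 0 ≤ C ∧ ∀ f ∈ X.carrier, Y.norm (fun w => h w * f w) ≤ C * X.norm f}

/-- Basic facts about `lipConst` of a Lipschitz function. -/
lemma lipConst_spec {φ : ℝ → ℝ} (h : ∃ K : NNReal, LipschitzWith K φ) :
    0 ≤ lipConst φ ∧ ∀ x y : ℝ, |φ x - φ y| ≤ lipConst φ * |x - y| := by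
  obtain ⟨K, hK⟩ := h
  have hne : {K : ℝ | 0 ≤ K ∧ ∀ x y : ℝ, |φ x - φ y| ≤ K * |x - y|}.Nonempty := by
    refine ⟨K, K.coe_nonneg, fun x y => ?_⟩
    have := hK.dist_le_mul x y
    simpa [Real.dist_eq] using this
  have hnonneg : 0 ≤ lipConst φ := le_csInf hne fun K hK => hK.1
  refine ⟨hnonneg, fun x y => ?_⟩
  rcases eq_or_ne x y with rfl | hxy
  · simp
  · have hd : 0 < |x - y| := abs_pos.mpr (sub_ne_zero.mpr hxy)
    have h1 : |φ x - φ y| / |x - y| ≤ lipConst φ :=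
      le_csInf hne fun K hK => (div_le_iff₀ hd).mpr (hK.2 x y)
    exact (div_le_iff₀ hd).mp h1

lemma lipConst_bound {φ : ℝ → ℝ} (h : IsLip0 φ) (x : ℝ) : |φ x| ≤ lipConst φ * |x| := by
  have := (lipConst_spec h.2).2 x 0
  simpa [h.1] using this

lemma lipConst_nonneg {φ : ℝ → ℝ} (h : IsLip0 φ) : 0 ≤ lipConst φ :=
  (lipConst_spec h.2).1

lemma measurable_simple_comp {Ω : Type*} [MeasurableSpace Ω] {ψ : Ω → ℝ → ℝ}
    (hψ : SimpleLipValued ψ) {f : Ω → ℝ} (hf : Measurable f) :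
    Measurable (fun w => ψ w (f w)) := by
  obtain ⟨hfin, hfib, hlip⟩ := hψ
  intro s hs
  have heq : (fun w => ψ w (f w)) ⁻¹' s
      = ⋃ φ ∈ Set.range ψ, ({w | ψ w = φ} ∩ ((fun w => φ (f w)) ⁻¹' s)) := by
    ext w
    simp only [Set.mem_preimage, Set.mem_iUnion, Set.mem_inter_iff, Set.mem_setOf_eq,
      Set.mem_range]
    constructor
    · intro hw; exact ⟨ψ w, ⟨w, rfl⟩, rfl, hw⟩
    · rintro ⟨φ, _, h1, h2⟩; rw [h1]; exact h2
  rw [heq]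
  refine hfin.measurableSet_biUnion fun φ hφ => (hfib φ).inter ?_
  obtain ⟨w₀, rfl⟩ := hφ
  obtain ⟨K, hK⟩ := (hlip w₀).2
  exact (hK.continuous.measurable.comp hf) hs

lemma meas_superpos {Ω : Type*} [MeasurableSpace Ω] {μ : Measure Ω} (hcomp : μ.IsComplete)
    {Φ : Ω → ℝ → ℝ} (hΦ0 : ∀ w, IsLip0 (Φ w)) (hsm : StronglyMeasLip μ Φ)
    {f : Ω → ℝ} (hf : Measurable f) : Measurable (fun w => Φ w (f w)) := by
  haveI := hcomp
  obtain ⟨ψ, hψ, hae⟩ := hsm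
  have hmeas : ∀ n, Measurable (fun w => ψ n w (f w)) :=
    fun n => measurable_simple_comp (hψ n) hf
  have hlim : ∀ᵐ w ∂μ, Tendsto (fun n => ψ n w (f w)) atTop (𝓝 (Φ w (f w))) := by
    filter_upwards [hae] with w hw
    rw [tendsto_iff_dist_tendsto_zero]
    refine squeeze_zero (fun n => dist_nonneg)
      (fun n => ?_) (by simpa using hw.mul_const |f w|)
    have hD : IsLip0 (Φ w - ψ n w) := by
      obtain ⟨K1, hK1⟩ := (hΦ0 w).2
      obtain ⟨K2, hK2⟩ := ((hψ n).2.2 w).2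
      exact ⟨by simp [Pi.sub_apply, (hΦ0 w).1, ((hψ n).2.2 w).1], ⟨K1 + K2, hK1.sub hK2⟩⟩
    have := lipConst_bound hD (f w)
    simpa [Real.dist_eq, Pi.sub_apply, abs_sub_comm] using this
  exact (aemeasurable_of_tendsto_metrizable_ae atTop
    (fun n => (hmeas n).aemeasurable) hlim).nullMeasurable.measurable_of_complete
section BFS
variable {Ω : Type*} [MeasurableSpace Ω] {μ : Measure Ω} (X : BanachFunctionSpace Ω μ)

lemma BFS.norm_zero : X.norm (fun _ => (0 : ℝ)) = 0 := by
  have := X.norm_smul 0 (fun _ => (0 : ℝ))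
  have h0 : (0 : ℝ) • (fun _ : Ω => (0 : ℝ)) = (fun _ : Ω => (0 : ℝ)) := by
    funext w; simp
  rw [h0] at this
  simpa using this

lemma BFS.neg_mem {f : Ω → ℝ} (hf : f ∈ X.carrier) : -f ∈ X.carrier := by
  have := X.smul_mem (-1) f hf
  have h : (-1 : ℝ) • f = -f := by funext w; simp
  rwa [h] at this

lemma BFS.sub_mem {f g : Ω → ℝ} (hf : f ∈ X.carrier) (hg : g ∈ X.carrier) :
    f - g ∈ X.carrier := by
  have := X.add_mem f hf (-g) (BFS.neg_mem X hg)
  rwa [← sub_eq_add_neg] at this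

lemma BFS.norm_neg' (f g : Ω → ℝ) : X.norm (f - g) = X.norm (g - f) := by
  have := X.norm_smul (-1) (g - f)
  have h : (-1 : ℝ) • (g - f) = f - g := by funext w; simp [Pi.sub_apply, Pi.smul_apply]
  rw [h] at this
  simpa using this

lemma BFS.norm_eq_zero_iff {f : Ω → ℝ} (hf : f ∈ X.carrier) :
    X.norm f = 0 ↔ f =ᵐ[μ] (fun _ => (0 : ℝ)) := by
  constructor
  · intro h0
    by_contra hne
    exact absurd h0 (ne_of_gt (X.norm_pos f hf hne))
  · intro h
    rw [X.norm_congr f _ h, BFS.norm_zero]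

lemma BFS.abs_mem {f : Ω → ℝ} (hf : f ∈ X.carrier) :
    (fun w => |f w|) ∈ X.carrier :=
  X.ideal_mem _ (X.measurable_mem f hf).abs f hf
    (Filter.Eventually.of_forall fun w => by simp)

lemma BFS.norm_abs {f : Ω → ℝ} (hf : f ∈ X.carrier) :
    X.norm (fun w => |f w|) = X.norm f := by
  have h1 := X.norm_mono _ (BFS.abs_mem X hf) f hf
    (Filter.Eventually.of_forall fun w => by simp)
  have h2 := X.norm_mono f hf _ (BFS.abs_mem X hf)
    (Filter.Eventually.of_forall fun w => by simp)
  linarith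

lemma BFS.sum_mem (u : ℕ → Ω → ℝ) (hu : ∀ k, u k ∈ X.carrier) (N : ℕ) :
    (fun w => ∑ k ∈ Finset.range N, u k w) ∈ X.carrier := by
  induction N with
  | zero => simpa using X.zero_mem
  | succ n ih =>
    have := X.add_mem _ ih (u n) (hu n)
    have heq : (fun w => ∑ k ∈ Finset.range n, u k w) + u n
        = (fun w => ∑ k ∈ Finset.range (n+1), u k w) := by
      funext w; simp [Finset.sum_range_succ]
    rwa [heq] at this

lemma BFS.sum_Ico_mem (u : ℕ → Ω → ℝ) (hu : ∀ k, u k ∈ X.carrier) (N M : ℕ) :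
    (fun w => ∑ k ∈ Finset.Ico N M, u k w) ∈ X.carrier := by
  induction M with
  | zero => simpa using X.zero_mem
  | succ m ih =>
    by_cases hm : N ≤ m
    · have := X.add_mem _ ih (u m) (hu m)
      have heq : (fun w => ∑ k ∈ Finset.Ico N m, u k w) + u m
          = (fun w => ∑ k ∈ Finset.Ico N (m+1), u k w) := by
        funext w; simp [Finset.sum_Ico_succ_top hm]
      rwa [heq] at this
    · have : Finset.Ico N (m+1) = ∅ := by
        rw [Finset.Ico_eq_empty_iff]; omega
      rw [this]; simpa using X.zero_mem

lemma BFS.norm_sum_Ico_le (u : ℕ → Ω → ℝ) (hu : ∀ k, u k ∈ X.carrier) (N M : ℕ) :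
    X.norm (fun w => ∑ k ∈ Finset.Ico N M, u k w) ≤ ∑ k ∈ Finset.Ico N M, X.norm (u k) := by
  induction M with
  | zero => simp [BFS.norm_zero]
  | succ m ih =>
    by_cases hm : N ≤ m
    · have heq : (fun w => ∑ k ∈ Finset.Ico N (m+1), u k w)
          = (fun w => ∑ k ∈ Finset.Ico N m, u k w) + u m := by
        funext w; simp [Finset.sum_Ico_succ_top hm]
      rw [heq, Finset.sum_Ico_succ_top hm]
      have := X.norm_triangle _ (BFS.sum_Ico_mem X u hu N m) (u m) (hu m)
      linarith
    · have : Finset.Ico N (m+1) = ∅ := by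
        rw [Finset.Ico_eq_empty_iff]; omega
      simp [this, BFS.norm_zero]

end BFS
/-- The positive cone is closed: if `u` is norm-approximated by eventually-nonnegative
functions, then `u ≥ 0` a.e. -/
lemma BFS.ae_nonneg_of_approx {Ω : Type*} [MeasurableSpace Ω] {μ : Measure Ω}
    (X : BanachFunctionSpace Ω μ) {u : Ω → ℝ} (hu : u ∈ X.carrier)
    {v : ℕ → Ω → ℝ} (hv : ∀ M, v M ∈ X.carrier)
    (hvpos : ∀ᶠ M in atTop, ∀ w, 0 ≤ v M w)
    (htend : Tendsto (fun M => X.norm (u - v M)) atTop (𝓝 0)) :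
    ∀ᵐ w ∂μ, 0 ≤ u w := by
  set uneg : Ω → ℝ := fun w => max (-(u w)) 0 with huneg
  have hunegmem : uneg ∈ X.carrier := by
    refine X.ideal_mem uneg (((X.measurable_mem u hu).neg).max measurable_const) u hu
      (Filter.Eventually.of_forall fun w => ?_)
    rw [abs_of_nonneg (le_max_right _ _)]
    exact max_le (neg_le_abs _) (abs_nonneg _)
  have hkey : ∀ᶠ M in atTop, X.norm uneg ≤ X.norm (u - v M) := by
    filter_upwards [hvpos] with M hM
    refine X.norm_mono uneg hunegmem (u - v M) (BFS.sub_mem X hu (hv M))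
      (Filter.Eventually.of_forall fun w => ?_)
    rw [abs_of_nonneg (le_max_right _ _)]
    refine max_le ?_ (abs_nonneg _)
    calc -(u w) ≤ v M w - u w := by linarith [hM w]
      _ ≤ |v M w - u w| := le_abs_self _
      _ = |u w - v M w| := abs_sub_comm _ _
      _ = |(u - v M) w| := by simp [Pi.sub_apply]
  have hle0 : X.norm uneg ≤ 0 := ge_of_tendsto htend hkey
  have h0 : X.norm uneg = 0 := le_antisymm hle0 (X.norm_nonneg _)
  have := (BFS.norm_eq_zero_iff X hunegmem).mp h0
  filter_upwards [this] with w hw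
  have : max (-(u w)) 0 = 0 := hw
  have : -(u w) ≤ 0 := by
    by_contra hcon
    push_neg at hcon
    rw [max_eq_left hcon.le] at this
    linarith
  linarith

/-- A positive multiplication operator between Banach function spaces is bounded. -/
lemma mult_bounded {Ω : Type*} [MeasurableSpace Ω] {μ : Measure Ω}
    (X Y : BanachFunctionSpace Ω μ) (h : Ω → ℝ) (hpos : ∀ w, 0 ≤ h w)
    (hmult : ∀ f ∈ X.carrier, (fun w => h w * f w) ∈ Y.carrier) :
    ∃ C : ℝ, 0 ≤ C ∧ ∀ f ∈ X.carrier, Y.norm (fun w => h w * f w) ≤ C * X.norm f := by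
  by_contra hC
  push_neg at hC
  have key : ∀ n : ℕ, ∃ g, g ∈ X.carrier ∧ (∀ w, 0 ≤ g w) ∧ X.norm g ≤ (1/2:ℝ)^n ∧
      (n : ℝ) < Y.norm (fun w => h w * g w) := by
    intro n
    obtain ⟨f, hf, hlt⟩ := hC ((n : ℝ) * 2^n) (by positivity)
    have hnf : 0 < X.norm f := by
      rcases lt_or_eq_of_le (X.norm_nonneg f) with hp | hz
      · exact hp
      · exfalso
        have hf0 : f =ᵐ[μ] (fun _ => (0:ℝ)) := (BFS.norm_eq_zero_iff X hf).mp hz.symm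
        have heq : (fun w => h w * f w) =ᵐ[μ] (fun _ => (0:ℝ)) := by
          filter_upwards [hf0] with w hw
          have hw' : f w = 0 := hw
          show h w * f w = 0
          rw [hw', mul_zero]
        have hY0 : Y.norm (fun w => h w * f w) = 0 := by
          rw [Y.norm_congr _ _ heq, BFS.norm_zero]
        rw [hY0, ← hz] at hlt
        simp at hlt
    have h2pos : (0:ℝ) < 2^n * X.norm f := by positivity
    set c : ℝ := 1 / (2^n * X.norm f) with hc
    have hcpos : 0 < c := by positivity
    have hc1 : c * (2^n * X.norm f) = 1 := by
      rw [hc]; field_simp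
    refine ⟨fun w => c * |f w|, ?_, fun w => mul_nonneg hcpos.le (abs_nonneg _), ?_, ?_⟩
    · have hm := X.smul_mem c _ (BFS.abs_mem X hf)
      have heq : (c • fun w => |f w|) = (fun w => c * |f w|) := by
        funext w; simp [Pi.smul_apply]
      rwa [heq] at hm
    · have heq : (fun w => c * |f w|) = (c • fun w => |f w|) := by
        funext w; simp [Pi.smul_apply]
      rw [heq, X.norm_smul, BFS.norm_abs X hf, abs_of_pos hcpos]
      have hcx : c * X.norm f = (1/2:ℝ)^n := by
        rw [hc, div_mul_eq_mul_div, one_mul, div_eq_iff (ne_of_gt h2pos), ← mul_assoc,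
          ← mul_pow]
        norm_num
      rw [hcx]
    · have heq : (fun w => h w * (c * |f w|)) = (c • fun w => h w * |f w|) := by
        funext w; simp [Pi.smul_apply]; ring
      rw [heq, Y.norm_smul, abs_of_pos hcpos]
      have habs : Y.norm (fun w => h w * |f w|) = Y.norm (fun w => h w * f w) := by
        have hm1 := hmult _ (BFS.abs_mem X hf)
        have hm2 := hmult f hf
        have hae : ∀ᵐ w ∂μ, abs ((fun w => h w * |f w|) w) ≤ abs ((fun w => h w * f w) w) :=
          Filter.Eventually.of_forall fun w => by
            show abs (h w * abs (f w)) ≤ abs (h w * f w)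
            rw [abs_mul, abs_mul, abs_abs]
        have hae' : ∀ᵐ w ∂μ, abs ((fun w => h w * f w) w) ≤ abs ((fun w => h w * |f w|) w) :=
          Filter.Eventually.of_forall fun w => by
            show abs (h w * f w) ≤ abs (h w * abs (f w))
            rw [abs_mul, abs_mul, abs_abs]
        exact le_antisymm (Y.norm_mono _ hm1 _ hm2 hae) (Y.norm_mono _ hm2 _ hm1 hae')
      rw [habs]
      have := mul_lt_mul_of_pos_left hlt hcpos
      calc (n:ℝ) = c * ((n:ℝ) * 2^n * X.norm f) := by
            rw [show c * ((n:ℝ) * 2^n * X.norm f) = (n:ℝ) * (c * (2^n * X.norm f)) by ring,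
              hc1, mul_one]
        _ < c * Y.norm (fun w => h w * f w) := this
  choose g hgmem hgpos hgnorm hgbig using key
  set F : ℕ → Ω → ℝ := fun N w => ∑ k ∈ Finset.range N, g k w with hF
  have hFmem : ∀ N, F N ∈ X.carrier := fun N => BFS.sum_mem X g hgmem N
  have hdiff : ∀ N M, N ≤ M → F M - F N = fun w => ∑ k ∈ Finset.Ico N M, g k w := by
    intro N M hNM
    funext w
    simp only [hF, Pi.sub_apply]
    rw [Finset.sum_Ico_eq_sub _ hNM]
  have hgeo : ∀ N M : ℕ, ∑ k ∈ Finset.Ico N M, (1/2:ℝ)^k ≤ (1/2:ℝ)^N * 2 := by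
    intro N M
    rw [Finset.sum_Ico_eq_sum_range]
    have : ∀ i, (1/2:ℝ)^(N + i) = (1/2:ℝ)^N * (1/2:ℝ)^i := fun i => pow_add _ _ _
    calc ∑ i ∈ Finset.range (M - N), (1/2:ℝ)^(N + i)
        = (1/2:ℝ)^N * ∑ i ∈ Finset.range (M - N), (1/2:ℝ)^i := by
          rw [Finset.mul_sum]; exact Finset.sum_congr rfl fun i _ => this i
      _ ≤ (1/2:ℝ)^N * 2 := by
          exact mul_le_mul_of_nonneg_left (sum_geometric_two_le _) (by positivity)
  have hbound : ∀ N M : ℕ, N ≤ M → X.norm (F M - F N) ≤ (1/2:ℝ)^N * 2 := by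
    intro N M hNM
    rw [hdiff N M hNM]
    calc X.norm (fun w => ∑ k ∈ Finset.Ico N M, g k w)
        ≤ ∑ k ∈ Finset.Ico N M, X.norm (g k) := BFS.norm_sum_Ico_le X g hgmem N M
      _ ≤ ∑ k ∈ Finset.Ico N M, (1/2:ℝ)^k := Finset.sum_le_sum fun k _ => hgnorm k
      _ ≤ (1/2:ℝ)^N * 2 := hgeo N M
  have hcauchy : ∀ ε : ℝ, 0 < ε → ∃ N₀, ∀ m ≥ N₀, ∀ n ≥ N₀, X.norm (F m - F n) < ε := by
    intro ε hε
    obtain ⟨N₀, hN₀⟩ := exists_pow_lt_of_lt_one (x := ε/2) (y := (1/2:ℝ)) (by linarith)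
      (by norm_num)
    refine ⟨N₀, fun m hm n hn => ?_⟩
    have main : ∀ a b : ℕ, N₀ ≤ a → a ≤ b → X.norm (F b - F a) < ε := by
      intro a b ha hab
      have h1 := hbound a b hab
      have h2 : (1/2:ℝ)^a ≤ (1/2:ℝ)^N₀ :=
        pow_le_pow_of_le_one (by norm_num) (by norm_num) ha
      linarith
    rcases le_total n m with hnm | hmn
    · exact main n m hn hnm
    · rw [BFS.norm_neg' X (F m) (F n)]
      exact main m n hm hmn
  obtain ⟨G, hGmem, hGtend⟩ := X.complete F hFmem hcauchy
  have hle : ∀ N, ∀ᵐ w ∂μ, F N w ≤ G w := by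
    intro N
    have hsub : ∀ᵐ w ∂μ, 0 ≤ (G - F N) w := by
      refine BFS.ae_nonneg_of_approx X (BFS.sub_mem X hGmem (hFmem N))
        (v := fun M => F M - F N) (fun M => BFS.sub_mem X (hFmem M) (hFmem N)) ?_ ?_
      · rw [eventually_atTop]
        refine ⟨N, fun M hM w => ?_⟩
        show 0 ≤ (F M - F N) w
        rw [hdiff N M hM]
        exact Finset.sum_nonneg fun k _ => hgpos k w
      · have heq : ∀ M, (G - F N) - (F M - F N) = G - F M := fun M =>
          sub_sub_sub_cancel_right _ _ _
        have heq2 : (fun M => X.norm ((G - F N) - (F M - F N)))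
            = fun M => X.norm (F M - G) := by
          funext M; rw [heq M, BFS.norm_neg' X G (F M)]
        rw [heq2]
        exact hGtend
    filter_upwards [hsub] with w hw
    simpa [Pi.sub_apply] using hw
  have hfinal : ∀ n : ℕ, (n:ℝ) < Y.norm (fun w => h w * G w) := by
    intro n
    have h1 := hle (n+1)
    have h0 := hle 0
    have hmono : Y.norm (fun w => h w * g n w) ≤ Y.norm (fun w => h w * G w) := by
      refine Y.norm_mono _ (hmult _ (hgmem n)) _ (hmult _ hGmem) ?_
      filter_upwards [h1, h0] with w hw1 hw0
      have hgle : g n w ≤ G w := by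
        have hsingle : g n w ≤ F (n+1) w := by
          simp only [hF]
          exact Finset.single_le_sum (fun k _ => hgpos k w) (Finset.self_mem_range_succ n)
        linarith
      have hG0 : 0 ≤ G w := by
        have : F 0 w = 0 := by simp [hF]
        linarith
      rw [abs_of_nonneg (mul_nonneg (hpos w) (hgpos n w)),
        abs_of_nonneg (mul_nonneg (hpos w) hG0)]
      exact mul_le_mul_of_nonneg_left hgle (hpos w)
    linarith [hgbig n]
  obtain ⟨n, hn⟩ := exists_nat_gt (Y.norm (fun w => h w * G w))
  linarith [hfinal n]
lemma multOpNorm_bound {Ω : Type*} [MeasurableSpace Ω] {μ : Measure Ω}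
    (X Y : BanachFunctionSpace Ω μ) (h : Ω → ℝ)
    (hS : {C : ℝ | 0 ≤ C ∧ ∀ f ∈ X.carrier,
      Y.norm (fun w => h w * f w) ≤ C * X.norm f}.Nonempty)
    {f : Ω → ℝ} (hf : f ∈ X.carrier) :
    Y.norm (fun w => h w * f w) ≤ multOpNorm X Y h * X.norm f := by
  obtain ⟨C0, hC0⟩ := hS
  rcases lt_or_eq_of_le (X.norm_nonneg f) with hp | hz
  · have hdiv : Y.norm (fun w => h w * f w) / X.norm f ≤ multOpNorm X Y h :=
      le_csInf ⟨C0, hC0⟩ fun C hC => (div_le_iff₀ hp).mpr (hC.2 f hf)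
    exact (div_le_iff₀ hp).mp hdiv
  · have h1 := hC0.2 f hf
    rw [← hz, mul_zero] at h1 ⊢
    exact h1

/-- if `Φ : Ω → Lip₀(ℝ)` is strongly measurable and
`Lip(Φ(·)) ∈ M(X,Y)`, then `T_Φ(f)(w) = Φ(w)(f(w))` well-defines an operator
`X(μ) → Y(μ)` which is Lipschitz continuous with constant `‖Lip(Φ(·))‖_{M(X,Y)}`. -/
theorem stmt12 {Ω : Type*} [MeasurableSpace Ω] (μ : Measure Ω) (hcomp : μ.IsComplete)
    (X Y : BanachFunctionSpace Ω μ)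
    (Φ : Ω → ℝ → ℝ) (hΦ0 : ∀ w, IsLip0 (Φ w))
    (hsm : StronglyMeasLip μ Φ)
    (hmult : ∀ f ∈ X.carrier, (fun w => lipConst (Φ w) * f w) ∈ Y.carrier) :
    (∀ f ∈ X.carrier, (fun w => Φ w (f w)) ∈ Y.carrier) ∧
    (∀ f ∈ X.carrier, ∀ g ∈ X.carrier,
      Y.norm ((fun w => Φ w (f w)) - (fun w => Φ w (g w))) ≤
        multOpNorm X Y (fun w => lipConst (Φ w)) * X.norm (f - g)) := by

  set h : Ω → ℝ := fun w => lipConst (Φ w) with hh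
  have hhpos : ∀ w, 0 ≤ h w := fun w => lipConst_nonneg (hΦ0 w)
  have hmem : ∀ f ∈ X.carrier, (fun w => Φ w (f w)) ∈ Y.carrier := by
    intro f hf
    refine Y.ideal_mem _ (meas_superpos hcomp hΦ0 hsm (X.measurable_mem f hf)) _ (hmult f hf)
      (Filter.Eventually.of_forall fun w => ?_)
    have := lipConst_bound (hΦ0 w) (f w)
    calc |Φ w (f w)| ≤ lipConst (Φ w) * |f w| := this
      _ = |lipConst (Φ w) * f w| := by
          rw [abs_mul, abs_of_nonneg (lipConst_nonneg (hΦ0 w))]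
  refine ⟨hmem, fun f hf g hg => ?_⟩
  have hfg : f - g ∈ X.carrier := BFS.sub_mem X hf hg
  have hdiffmem : ((fun w => Φ w (f w)) - (fun w => Φ w (g w))) ∈ Y.carrier := by
    refine Y.ideal_mem _ ?_ _ (hmult (f - g) hfg) (Filter.Eventually.of_forall fun w => ?_)
    · exact (meas_superpos hcomp hΦ0 hsm (X.measurable_mem f hf)).sub
        (meas_superpos hcomp hΦ0 hsm (X.measurable_mem g hg))
    · show |Φ w (f w) - Φ w (g w)| ≤ |lipConst (Φ w) * (f - g) w|
      calc |Φ w (f w) - Φ w (g w)| ≤ lipConst (Φ w) * |f w - g w| :=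
            (lipConst_spec (hΦ0 w).2).2 (f w) (g w)
        _ = |lipConst (Φ w) * (f - g) w| := by
            rw [abs_mul, abs_of_nonneg (lipConst_nonneg (hΦ0 w)), Pi.sub_apply]
  have hstep1 : Y.norm ((fun w => Φ w (f w)) - (fun w => Φ w (g w)))
      ≤ Y.norm (fun w => lipConst (Φ w) * (f - g) w) := by
    refine Y.norm_mono _ hdiffmem _ (hmult (f - g) hfg)
      (Filter.Eventually.of_forall fun w => ?_)
    show |Φ w (f w) - Φ w (g w)| ≤ |lipConst (Φ w) * (f - g) w|
    calc |Φ w (f w) - Φ w (g w)| ≤ lipConst (Φ w) * |f w - g w| :=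
          (lipConst_spec (hΦ0 w).2).2 (f w) (g w)
      _ = |lipConst (Φ w) * (f - g) w| := by
          rw [abs_mul, abs_of_nonneg (lipConst_nonneg (hΦ0 w)), Pi.sub_apply]
  have hbdd := mult_bounded X Y h hhpos hmult
  obtain ⟨C, hC0, hCle⟩ := hbdd
  have hstep2 := multOpNorm_bound X Y h ⟨C, hC0, hCle⟩ hfg
  exact le_trans hstep1 hstep2
end

section
/- Let Φ : Ω → Lip₀(ℝ) be strongly measurable with Lip(Φ(·)) ∈ M(X,Y), defining the operator T_Φ(f)(w) = Φ(w)(f(w)) from X(μ) to Y(μ). Then the bound function K(w) = Lip(Φ(w)) is optimal: if h is any measurable function such that |T_Φ(f)(w) − T_Φ(g)(w)| ≤ h(w)·|f(w) − g(w)| μ-a.e. for all f, g ∈ X(μ), then Lip(Φ(w)) ≤ h(w) for μ-almost every w. -/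
open MeasureTheory Filter Set Topology

/-- the bound function `K(w) = Lip(Φ(w))` of the superposition
operator `T_Φ` is optimal: any measurable (nonnegative) bound function `h` for
`T_Φ` satisfies `Lip(Φ(w)) ≤ h(w)` μ-a.e. -/
theorem stmt15 {Ω : Type*} [MeasurableSpace Ω] (μ : Measure Ω)
    (X Y : BanachFunctionSpace Ω μ)
    (hconst : ∀ lam : ℝ, (fun _ : Ω => lam) ∈ X.carrier)
    (Φ : Ω → ℝ → ℝ) (hΦ0 : ∀ w, IsLip0 (Φ w))
    (hsm : StronglyMeasLip μ Φ)
    (hmult : ∀ f ∈ X.carrier, (fun w => lipConst (Φ w) * f w) ∈ Y.carrier)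
    (h : Ω → ℝ) (hmeas : Measurable h) (hnonneg : ∀ᵐ w ∂μ, 0 ≤ h w)
    (hdom : ∀ f ∈ X.carrier, ∀ g ∈ X.carrier,
      ∀ᵐ w ∂μ, |Φ w (f w) - Φ w (g w)| ≤ h w * |f w - g w|) :
    ∀ᵐ w ∂μ, lipConst (Φ w) ≤ h w := by
  have key : ∀ q : ℚ × ℚ, ∀ᵐ w ∂μ,
      |Φ w (q.1 : ℝ) - Φ w (q.2 : ℝ)| ≤ h w * |(q.1 : ℝ) - (q.2 : ℝ)| := by
    intro q
    simpa using hdom (fun _ => (q.1 : ℝ)) (hconst _) (fun _ => (q.2 : ℝ)) (hconst _)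
  have hall : ∀ᵐ w ∂μ, ∀ q : ℚ × ℚ,
      |Φ w (q.1 : ℝ) - Φ w (q.2 : ℝ)| ≤ h w * |(q.1 : ℝ) - (q.2 : ℝ)| :=
    ae_all_iff.mpr key
  filter_upwards [hall, hnonneg] with w hw hw0
  have hcont : Continuous (Φ w) := by
    obtain ⟨_, K, hK⟩ := hΦ0 w
    exact hK.continuous
  have hallreal : ∀ x y : ℝ, |Φ w x - Φ w y| ≤ h w * |x - y| := by
    have hclosed : IsClosed {p : ℝ × ℝ | |Φ w p.1 - Φ w p.2| ≤ h w * |p.1 - p.2|} := by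
      apply isClosed_le
      · exact ((hcont.comp continuous_fst).sub (hcont.comp continuous_snd)).abs
      · exact continuous_const.mul ((continuous_fst.sub continuous_snd).abs)
    have hd : DenseRange (Prod.map ((↑) : ℚ → ℝ) ((↑) : ℚ → ℝ)) :=
      Rat.denseRange_cast.prodMap Rat.denseRange_cast
    have hsub : Set.range (Prod.map ((↑) : ℚ → ℝ) ((↑) : ℚ → ℝ)) ⊆
        {p : ℝ × ℝ | |Φ w p.1 - Φ w p.2| ≤ h w * |p.1 - p.2|} := by
      rintro _ ⟨q, rfl⟩
      exact hw q
    intro x y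
    have : (x, y) ∈ {p : ℝ × ℝ | |Φ w p.1 - Φ w p.2| ≤ h w * |p.1 - p.2|} := by
      have : closure (Set.range (Prod.map ((↑) : ℚ → ℝ) ((↑) : ℚ → ℝ))) ⊆
          {p : ℝ × ℝ | |Φ w p.1 - Φ w p.2| ≤ h w * |p.1 - p.2|} :=
        hclosed.closure_subset_iff.mpr hsub
      exact this (by rw [hd.closure_range]; trivial)
    exact this
  exact csInf_le ⟨0, fun K hK => hK.1⟩ ⟨hw0, hallreal⟩
end

section
/- Let μ be the Lebesgue measure on [0,1] and define T : L¹(μ) → L¹(μ) by T(f)(w) = min{f(w)², 1/√w}. Then T satisfies the lattice Lipschitz condition |T(f)(w) − T(g)(w)| ≤ (2/√w)·|f(w) − g(w)| for a.e. w ∈ (0,1] and all f, g ∈ L¹(μ), but T is not Lipschitz continuous as a map between the normed spaces L¹(μ) and L¹(μ): with fₙ = n·χ_{[0,1/n⁴]}, the ratio ‖T(fₙ) − T(0)‖₁ / ‖fₙ − 0‖₁ is unbounded in n. -/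
open MeasureTheory Filter Set Topology

/-- The superposition operator `T(f)(w) = min {f(w)², 1/√w}`. -/
noncomputable def Tsq (f : ℝ → ℝ) : ℝ → ℝ := fun w => min ((f w) ^ 2) (1 / Real.sqrt w)

/-!
Writing `min (x²) M = (min |x| √M)²` shows that truncating `t ↦ t²` at height `M` is
`2√M`-Lipschitz; for `M = 1/√w ≥ 1` this is at most `2/√w`. The truncation does not tame
the norm, though: on the spike `fₙ = n·χ_[0, n⁻⁴]` it is inactive wherever `fₙ ≠ 0`,
since there `√w ≤ n⁻²`, so `T fₙ = n²·χ_(0, n⁻⁴]` and `‖T fₙ‖₁ = n⁻² = n·‖fₙ‖₁`.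
-/

lemma min_sq_eq_sq_min_abs_sqrt {M : ℝ} (hM : 0 ≤ M) (x : ℝ) :
    min (x ^ 2) M = min |x| √M ^ 2 := by
  rw [← sq_abs x, ← Real.sq_sqrt hM, Real.sqrt_sq (Real.sqrt_nonneg M)]
  rcases le_total |x| √M with h | h
  · rw [min_eq_left h, min_eq_left (pow_le_pow_left₀ (abs_nonneg x) h 2)]
  · rw [min_eq_right h, min_eq_right (pow_le_pow_left₀ (Real.sqrt_nonneg M) h 2)]

lemma abs_min_sq_sub_min_sq_le {M : ℝ} (hM : 0 ≤ M) (x y : ℝ) :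
    |min (x ^ 2) M - min (y ^ 2) M| ≤ 2 * √M * |x - y| := by
  rw [min_sq_eq_sq_min_abs_sqrt hM, min_sq_eq_sq_min_abs_sqrt hM]
  set a := min |x| √M
  set b := min |y| √M
  have hab : |a - b| ≤ |x - y| := by
    refine (abs_min_sub_min_le_max _ _ _ _).trans ?_
    simpa using abs_abs_sub_abs_le_abs_sub x y
  have hsum : |a + b| ≤ 2 * √M := by
    have ha : 0 ≤ a := le_min (abs_nonneg _) (Real.sqrt_nonneg M)
    have hb : 0 ≤ b := le_min (abs_nonneg _) (Real.sqrt_nonneg M)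
    rw [abs_of_nonneg (add_nonneg ha hb)]
    linarith [min_le_right |x| √M, min_le_right |y| √M]
  calc |a ^ 2 - b ^ 2| = |a + b| * |a - b| := by rw [sq_sub_sq, abs_mul]
    _ ≤ 2 * √M * |x - y| := mul_le_mul hsum hab (abs_nonneg _) (by positivity)

lemma integrableOn_one_div_sqrt_Icc : IntegrableOn (fun w : ℝ => 1 / √w) (Icc 0 1) := by
  have hrpow : IntegrableOn (fun w : ℝ => w ^ (-(1 / 2) : ℝ)) (Ioo 0 1) :=
    (intervalIntegral.integrableOn_Ioo_rpow_iff one_pos).2 (by norm_num)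
  refine (integrableOn_Icc_iff_integrableOn_Ioo).2
    (hrpow.congr_fun (fun w hw => ?_) measurableSet_Ioo)
  dsimp only
  rw [Real.rpow_neg hw.1.le, ← Real.sqrt_eq_rpow, one_div]

lemma eLpNorm_one_indicator_const_restrict_of_subset {α : Type*} [MeasurableSpace α]
    {μ : Measure α} {s t : Set α} (hs : MeasurableSet s) (hst : s ⊆ t) (c : ℝ) :
    eLpNorm (s.indicator fun _ => c) 1 (μ.restrict t) = ‖c‖ₑ * μ s := by
  rw [eLpNorm_indicator_const hs one_ne_zero ENNReal.one_ne_top, Measure.restrict_eq_self μ hst]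
  simp

lemma Tsq_nonneg (f : ℝ → ℝ) (w : ℝ) : 0 ≤ Tsq f w :=
  le_min (sq_nonneg _) (by positivity)

lemma Tsq_le_one_div_sqrt (f : ℝ → ℝ) (w : ℝ) : Tsq f w ≤ 1 / √w :=
  min_le_right _ _

lemma Tsq_zero : Tsq (fun _ => 0) = 0 := by
  funext w
  rw [Tsq, zero_pow two_ne_zero]
  exact min_eq_left (by positivity)

lemma measurable_Tsq {f : ℝ → ℝ} (hf : Measurable f) : Measurable (Tsq f) :=
  (hf.pow_const 2).min (measurable_const.div Real.continuous_sqrt.measurable)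

lemma integrable_Tsq {f : ℝ → ℝ} (hf : Measurable f) :
    Integrable (Tsq f) (volume.restrict (Icc 0 1)) :=
  integrableOn_one_div_sqrt_Icc.mono' (measurable_Tsq hf).aestronglyMeasurable
    (Eventually.of_forall fun w => by
      rw [Real.norm_of_nonneg (Tsq_nonneg f w)]
      exact Tsq_le_one_div_sqrt f w)

lemma abs_Tsq_sub_Tsq_le (f g : ℝ → ℝ) {w : ℝ} (hw : w ≤ 1) :
    |Tsq f w - Tsq g w| ≤ 2 / √w * |f w - g w| := by
  rcases (Real.sqrt_nonneg w).eq_or_lt with h0 | hpos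
  -- For `w ≤ 0` both sides vanish, because `1 / √w = 1 / 0 = 0`.
  · simp [Tsq, ← h0, min_eq_right (sq_nonneg _)]
  have hM : 1 ≤ 1 / √w := by
    rw [le_div_iff₀ hpos, one_mul]
    exact Real.sqrt_le_one.2 hw
  calc |Tsq f w - Tsq g w| ≤ 2 * √(1 / √w) * |f w - g w| :=
        abs_min_sq_sub_min_sq_le (zero_le_one.trans hM) _ _
    _ ≤ 2 * (1 / √w) * |f w - g w| := by
        gcongr
        exact Real.sqrt_le_self_iff.2 (Or.inr hM)
    _ = 2 / √w * |f w - g w| := by ring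

noncomputable def spike (c : ℝ) : ℝ → ℝ := (Icc 0 (c ^ 4)⁻¹).indicator fun _ => c

lemma Tsq_spike {c : ℝ} (hc : c ≠ 0) :
    Tsq (spike c) = (Ioc 0 (c ^ 4)⁻¹).indicator fun _ => c ^ 2 := by
  funext w
  by_cases hw : w ∈ Ioc 0 (c ^ 4)⁻¹
  · have hsqrt : √w ≤ (c ^ 2)⁻¹ := by
      rw [Real.sqrt_le_left (by positivity)]
      exact hw.2.trans_eq (by ring)
    have hle : c ^ 2 ≤ 1 / √w := by
      rw [le_div_iff₀ (Real.sqrt_pos.2 hw.1), ← le_inv_mul_iff₀ (by positivity), mul_one]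
      exact hsqrt
    rw [indicator_of_mem hw, Tsq, spike, indicator_of_mem (Ioc_subset_Icc_self hw)]
    exact min_eq_left hle
  · rw [indicator_of_notMem hw, Tsq]
    rcases le_or_gt w 0 with hw0 | hw0
    · rw [Real.sqrt_eq_zero'.2 hw0, div_zero]
      exact min_eq_right (sq_nonneg _)
    · rw [spike, indicator_of_notMem (fun h => hw ⟨hw0, h.2⟩), zero_pow two_ne_zero]
      exact min_eq_left (by positivity)

lemma eLpNorm_spike {c : ℝ} (hc : 1 ≤ c) :
    eLpNorm (spike c) 1 (volume.restrict (Icc 0 1)) = ENNReal.ofReal (c ^ 3)⁻¹ := by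
  have hsub : Icc 0 (c ^ 4)⁻¹ ⊆ Icc 0 1 :=
    Icc_subset_Icc_right (inv_le_one_of_one_le₀ (one_le_pow₀ hc))
  rw [spike, eLpNorm_one_indicator_const_restrict_of_subset measurableSet_Icc hsub,
    Real.volume_Icc, sub_zero, Real.enorm_of_nonneg (by linarith),
    ← ENNReal.ofReal_mul (by linarith)]
  congr 1
  field_simp

lemma eLpNorm_Tsq_spike {c : ℝ} (hc : 1 ≤ c) :
    eLpNorm (Tsq (spike c)) 1 (volume.restrict (Icc 0 1)) =
      ENNReal.ofReal c * eLpNorm (spike c) 1 (volume.restrict (Icc 0 1)) := by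
  have hsub : Ioc 0 (c ^ 4)⁻¹ ⊆ Icc 0 1 :=
    Ioc_subset_Icc_self.trans (Icc_subset_Icc_right (inv_le_one_of_one_le₀ (one_le_pow₀ hc)))
  rw [Tsq_spike (by positivity),
    eLpNorm_one_indicator_const_restrict_of_subset measurableSet_Ioc hsub, eLpNorm_spike hc,
    Real.volume_Ioc, sub_zero, Real.enorm_of_nonneg (by positivity),
    ← ENNReal.ofReal_mul (by positivity), ← ENNReal.ofReal_mul (by positivity)]
  congr 1
  field_simp

/-- `T(f)(w) = min{f(w)², 1/√w}` maps `L¹[0,1]` into `L¹[0,1]` and is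
lattice Lipschitz with bound `2/√w`, but is not Lipschitz continuous as a map of
normed spaces: for `fₙ = n·χ_{[0,1/n⁴]}` the ratio `‖T fₙ − T 0‖₁ / ‖fₙ‖₁` is unbounded. -/
theorem stmt19 :
    (∀ f : ℝ → ℝ, Measurable f →
      Integrable (Tsq f) (volume.restrict (Set.Icc (0:ℝ) 1))) ∧
    (∀ f g : ℝ → ℝ, ∀ᵐ w ∂(volume.restrict (Set.Icc (0:ℝ) 1)),
      |Tsq f w - Tsq g w| ≤ (2 / Real.sqrt w) * |f w - g w|) ∧
    (∀ C : ℝ, ∃ n : ℕ,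
      ENNReal.ofReal C *
          eLpNorm (fun w => Set.indicator (Set.Icc (0:ℝ) (((n:ℝ))^4)⁻¹)
            (fun _ => (n : ℝ)) w) 1 (volume.restrict (Set.Icc (0:ℝ) 1)) <
        eLpNorm (Tsq (fun w => Set.indicator (Set.Icc (0:ℝ) (((n:ℝ))^4)⁻¹)
            (fun _ => (n : ℝ)) w) - Tsq (fun _ => (0:ℝ))) 1
          (volume.restrict (Set.Icc (0:ℝ) 1))) := by
  refine ⟨fun f hf => integrable_Tsq hf, fun f g => ?_, fun C => ?_⟩
  · exact ae_restrict_of_forall_mem measurableSet_Icc fun w hw => abs_Tsq_sub_Tsq_le f g hw.2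
  obtain ⟨n, hn⟩ := exists_nat_gt (max 1 C)
  have hn1 : (1 : ℝ) ≤ n := (le_max_left 1 C).trans hn.le
  have hCn : ENNReal.ofReal C < ENNReal.ofReal n :=
    ENNReal.ofReal_lt_ofReal_iff'.2 ⟨(le_max_right 1 C).trans_lt hn, by linarith⟩
  have hspike_pos : eLpNorm (spike n) 1 (volume.restrict (Icc 0 1)) ≠ 0 := by
    rw [eLpNorm_spike hn1]
    exact (ENNReal.ofReal_pos.2 (by positivity)).ne'
  have hspike_fin : eLpNorm (spike n) 1 (volume.restrict (Icc 0 1)) ≠ ⊤ := by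
    rw [eLpNorm_spike hn1]
    exact ENNReal.ofReal_ne_top
  refine ⟨n, ?_⟩
  change ENNReal.ofReal C * eLpNorm (spike n) 1 _ <
    eLpNorm (Tsq (spike n) - Tsq (fun _ => 0)) 1 _
  rw [Tsq_zero, sub_zero, eLpNorm_Tsq_spike hn1]
  exact (ENNReal.mul_lt_mul_iff_left hspike_pos hspike_fin).2 hCn
end
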